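/- Let d ∈ ℕ, s, α, β, γ ∈ ℝ, p, r ∈ (0,∞), q ∈ (0,∞], μ, ν ∈ (−∞,0], and assume Property A'' holds. Then there is a constant C > 0, depending only on μ, ν, β, γ, p, d, r (and not on the families below), such that for all families (ξ_{j,t,m}) of real numbers and (λ_{j,t,m}) of numbers in {0,1} (indexed by ℕ₀ × {F,M}^d × ℤ^d), the sequence a = (a_{j,t,m})_{(j,t,m)∈J} with a_{j,t,m} := 2^{jα} (1 + ‖m‖_∞/2^j)^{β + (γ−β)·𝟙_{j=0}} λ_{j,t,m} ξ_{j,t,m} satisfies ‖a‖_{b^s_{p,q}} ≤ C · Ξ̃^{1/p}, where Ξ̃ is formed for some δ ∈ (0,1) chosen so that βp + d + (νp/max{r,p})(1−δ) < 0, γp + d + (νp/max{r,p})(1−δ) < 0 and s + d/2 + α + (μ/max{r,p})(1−δ) < 0. -/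

import Mathlib

open MeasureTheory ProbabilityTheory ENNReal

noncomputable section

/-- The sup-norm `‖m‖_∞` of a lattice point `m ∈ ℤ^d`, as a real number. -/
def znorm {d : ℕ} (m : Fin d → ℤ) : ℝ :=
  ((Finset.univ.sup fun i => (m i).natAbs : ℕ) : ℝ)

/-- `M_j = (2^{j+1}+1)^d`. -/
def Mnum (d j : ℕ) : ℕ := (2 ^ (j + 1) + 1) ^ d

/-- `N_j = M_{j+1} - M_j`. -/
def Nnum (d j : ℕ) : ℕ := Mnum d (j + 1) - Mnum d j

/-- The `ℓ^p`-norm (with values in `[0,∞]`) of a family of values in `[0,∞]`,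
for `p ∈ (0,∞]`. -/
def lpNorm (p : ℝ≥0∞) {ι : Type*} (x : ι → ℝ≥0∞) : ℝ≥0∞ :=
  if p = ∞ then ⨆ i, x i else (∑' i, x i ^ p.toReal) ^ (1 / p.toReal)

/-- The index set `{(j,t) : j ∈ ℕ₀, t ∈ T_j}` where `T_0 = {F}^d` and
`T_j = {F,M}^d \ {F}^d` for `j ≥ 1`; here `F = false`, `M = true`. -/
def JIdx (d : ℕ) : Type :=
  {jt : ℕ × (Fin d → Bool) // (jt.2 = fun _ => false) ↔ jt.1 = 0}

/-- The Besov sequence (quasi-)norm `‖a‖_{b^s_{p,q}}`, with values in `[0,∞]`,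
where `d/p` is read as `0` for `p = ∞`. -/
def besovNorm (d : ℕ) (s : ℝ) (p q : ℝ≥0∞)
    (a : ℕ → (Fin d → Bool) → (Fin d → ℤ) → ℝ) : ℝ≥0∞ :=
  lpNorm q (fun jt : JIdx d =>
    ENNReal.ofReal ((2 : ℝ) ^ ((jt.1.1 : ℝ) * (s + d / 2 - d * (p⁻¹).toReal))) *
      lpNorm p fun m : Fin d → ℤ => ENNReal.ofReal |a jt.1.1 jt.1.2 m|)

/-- The deterministic coefficient `2^{jα} (j+1)^θ (1+‖m‖_∞/2^j)^{β+(γ-β)𝟙_{j=0}}`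
of the Besov sequence prior. -/
def priorCoef (d : ℕ) (α β γ θ : ℝ) (j : ℕ) (m : Fin d → ℤ) : ℝ :=
  (2 : ℝ) ^ ((j : ℝ) * α) * ((j : ℝ) + 1) ^ θ *
    (1 + znorm m / 2 ^ j) ^ (if j = 0 then γ else β)

/-- The deterministic coefficient `2^{jα} (1+‖m‖_∞/2^j)^{β+(γ-β)𝟙_{j=0}}`
of the Bernoulli–Besov sequence prior. -/
def priorCoefB (d : ℕ) (α β γ : ℝ) (j : ℕ) (m : Fin d → ℤ) : ℝ :=
  (2 : ℝ) ^ ((j : ℝ) * α) * (1 + znorm m / 2 ^ j) ^ (if j = 0 then γ else β)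

/-- The Bernoulli success probability `ϱ_{j,m} = 2^{jμ}(1+‖m‖_∞/2^j)^ν`. -/
def rhoB (d : ℕ) (μ' ν : ℝ) (j : ℕ) (m : Fin d → ℤ) : ℝ :=
  (2 : ℝ) ^ ((j : ℝ) * μ') * (1 + znorm m / 2 ^ j) ^ ν

/-- Property A. -/
def PropertyA (d : ℕ) (s α β γ θ : ℝ) (p q : ℝ≥0∞) : Prop :=
  (if p = ∞ then γ ≤ 0 else γ < -((d : ℝ) / p.toReal)) ∧
  (if p = ∞ then β ≤ 0 else β < -((d : ℝ) / p.toReal)) ∧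
  (s + d / 2 + α < 0 ∨
    (s + d / 2 + α = 0 ∧ (if q = ∞ then θ ≤ 0 else θ < -(1 / q.toReal))))

/-- Property A'. -/
def PropertyA' (d : ℕ) (s α β γ μ' ν : ℝ) (p q : ℝ≥0∞) : Prop :=
  if p = ∞ then
    γ ≤ 0 ∧ β ≤ 0 ∧
      (if q = ∞ then s + d / 2 + α ≤ 0 else s + d / 2 + α < 0)
  else
    γ + (d + ν) / p.toReal < 0 ∧ β + (d + ν) / p.toReal < 0 ∧
      (if q = ∞ then s + d / 2 + α + μ' / p.toReal ≤ 0
        else s + d / 2 + α + μ' / p.toReal < 0)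

/-- Property A''. -/
def PropertyA'' (d : ℕ) (s α β γ μ' ν r : ℝ) (p : ℝ≥0∞) : Prop :=
  if p = ∞ then γ ≤ 0 ∧ β ≤ 0 ∧ s + d / 2 + α ≤ 0
  else
    γ + (d : ℝ) / p.toReal + ν / max r p.toReal < 0 ∧
    β + (d : ℝ) / p.toReal + ν / max r p.toReal < 0 ∧
    s + (d : ℝ) / 2 + α + μ' / max r p.toReal < 0

/-- The quantity `Ξ = max_t Ξ_t` from the master lemma, for a deterministic family `ξ`,
an exponent `pr ∈ (0,∞)` and an enumeration `φ` of `ℤ^d`. -/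
def XiQ (d : ℕ) (pr : ℝ) (φ : ℕ → Fin d → ℤ)
    (ξ : ℕ → (Fin d → Bool) → (Fin d → ℤ) → ℝ) : ℝ≥0∞ :=
  ⨆ t : Fin d → Bool, ⨆ j : ℕ,
    (ENNReal.ofReal ((Mnum d j : ℝ)⁻¹ *
        ∑ τ ∈ Finset.range (Mnum d j), |ξ j t (φ τ)| ^ pr) +
      ⨆ ℓ : ℕ, ⨆ _ : j ≤ ℓ,
        ENNReal.ofReal ((Nnum d ℓ : ℝ)⁻¹ *
          ∑ τ ∈ Finset.Ico (Mnum d ℓ) (Mnum d (ℓ + 1)), |ξ j t (φ τ)| ^ pr))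

/-- The quantity `Ξ̃ = max_t Ξ̃_t` from the Bernoulli master lemma. -/
def XiB (d : ℕ) (pr r μ' ν δ : ℝ) (φ : ℕ → Fin d → ℤ)
    (lam ξ : ℕ → (Fin d → Bool) → (Fin d → ℤ) → ℝ) : ℝ≥0∞ :=
  ⨆ t : Fin d → Bool, ⨆ j : ℕ,
    (ENNReal.ofReal ((Mnum d j : ℝ)⁻¹ *
        ∑ τ ∈ Finset.range (Mnum d j),
          rhoB d μ' ν j (φ τ) ^ (pr / max r pr * (δ - 1)) * lam j t (φ τ) *
            |ξ j t (φ τ)| ^ pr) +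
      ⨆ ℓ : ℕ, ⨆ _ : j ≤ ℓ,
        ENNReal.ofReal ((Nnum d ℓ : ℝ)⁻¹ *
          ∑ τ ∈ Finset.Ico (Mnum d ℓ) (Mnum d (ℓ + 1)),
            rhoB d μ' ν j (φ τ) ^ (pr / max r pr * (δ - 1)) * lam j t (φ τ) *
              |ξ j t (φ τ)| ^ pr))

/-- `exp(c · x^r)` for `x ∈ [0,∞]`, equal to `∞` for `x = ∞`. -/
def expENN (c r : ℝ) (x : ℝ≥0∞) : ℝ≥0∞ :=
  if x = ∞ then ∞ else ENNReal.ofReal (Real.exp (c * x.toReal ^ r))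


-- ===== auxiliary lemmas for stmt6 =====

lemma stmt6_znorm_nonneg {d : ℕ} (m : Fin d → ℤ) : 0 ≤ znorm m := Nat.cast_nonneg _

lemma stmt6_znorm_le_iff {d : ℕ} (m : Fin d → ℤ) (R : ℕ) :
    znorm m ≤ R ↔ ∀ i, (m i).natAbs ≤ R := by
  unfold znorm
  rw [Nat.cast_le]
  simp [Finset.sup_le_iff]

lemma stmt6_ball_card (d R : ℕ) :
    (Fintype.piFinset fun _ : Fin d => Finset.Icc (-(R:ℤ)) R).card = (2*R+1)^d := by
  rw [Fintype.card_piFinset]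
  simp [Int.card_Icc]
  congr 1
  omega

lemma stmt6_mem_ball_iff {d R : ℕ} (m : Fin d → ℤ) :
    m ∈ (Fintype.piFinset fun _ : Fin d => Finset.Icc (-(R:ℤ)) R) ↔ znorm m ≤ R := by
  rw [stmt6_znorm_le_iff, Fintype.mem_piFinset]
  refine forall_congr' fun i => ?_
  rw [Finset.mem_Icc]
  omega

lemma stmt6_Mnum_mono (d : ℕ) : Monotone (Mnum d) := by
  intro a b hab
  exact Nat.pow_le_pow_left
    (by have := Nat.pow_le_pow_right (by norm_num : 1 ≤ 2) (by omega : a+1 ≤ b+1); omega) d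

lemma stmt6_Mnum_lt (d : ℕ) (hd : 0 < d) (j : ℕ) : Mnum d j < Mnum d (j+1) := by
  have h : (2:ℕ)^(j+1)+1 < 2^(j+2)+1 := by
    have : (2:ℕ)^(j+1) < 2^(j+2) := Nat.pow_lt_pow_right (by norm_num) (by omega)
    omega
  exact Nat.pow_lt_pow_left h hd.ne'

lemma stmt6_Nnum_pos (d : ℕ) (hd : 0 < d) (j : ℕ) : 0 < Nnum d j :=
  Nat.sub_pos_of_lt (stmt6_Mnum_lt d hd j)

lemma stmt6_Mnum_pos (d : ℕ) (j : ℕ) : 0 < Mnum d j := pow_pos (by positivity) _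

lemma stmt6_Mnum_le (d j : ℕ) : Mnum d j ≤ 5^d * 2^(j*d) := by
  have h : 2^(j+1)+1 ≤ 5 * 2^j := by
    have : (1:ℕ) ≤ 2^j := Nat.one_le_two_pow
    rw [pow_succ]
    omega
  calc Mnum d j ≤ (5*2^j)^d := Nat.pow_le_pow_left h d
  _ = 5^d * 2^(j*d) := by rw [mul_pow, ← pow_mul, mul_comm j d, pow_mul, ← pow_mul, mul_comm d j]

lemma stmt6_Nnum_le (d j : ℕ) : Nnum d j ≤ 5^d * 2^(j*d) := by
  have h : 2^(j+2)+1 ≤ 5 * 2^j := by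
    have h1 : (1:ℕ) ≤ 2^j := Nat.one_le_two_pow
    have h2 : (2:ℕ)^(j+2) = 4 * 2^j := by rw [pow_add]; ring
    omega
  calc Nnum d j ≤ Mnum d (j+1) := Nat.sub_le _ _
  _ ≤ (5*2^j)^d := Nat.pow_le_pow_left h d
  _ = 5^d * 2^(j*d) := by rw [mul_pow, ← pow_mul, mul_comm j d, pow_mul, ← pow_mul, mul_comm d j]

lemma stmt6_phi_lb {d : ℕ} (hd : 0 < d) (φ : ℕ → Fin d → ℤ) (hb : Function.Bijective φ)
    (hm : Monotone fun τ => znorm (φ τ)) (ℓ τ : ℕ) (hτ : Mnum d ℓ ≤ τ) :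
    (2^ℓ : ℝ) ≤ znorm (φ τ) := by
  have key : (2^ℓ : ℝ) ≤ znorm (φ (Mnum d ℓ)) := by
    by_contra hlt
    push_neg at hlt
    have hle : ∀ τ' ≤ Mnum d ℓ, znorm (φ τ') ≤ (2^ℓ : ℕ) := by
      intro τ' hτ'
      push_cast
      exact le_of_lt (lt_of_le_of_lt (hm hτ') hlt)
    have hcard := Finset.card_le_card_of_injOn φ
      (s := Finset.range (Mnum d ℓ + 1))
      (t := Fintype.piFinset fun _ : Fin d => Finset.Icc (-((2^ℓ : ℕ):ℤ)) ((2^ℓ : ℕ):ℤ))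
      (fun a ha => (stmt6_mem_ball_iff _).2 (hle a (by simpa using Nat.lt_succ_iff.1 (Finset.mem_range.1 ha))))
      (hb.injective.injOn)
    rw [Finset.card_range, stmt6_ball_card] at hcard
    have : (2*2^ℓ+1)^d = Mnum d ℓ := by rw [Mnum]; ring_nf
    omega
  calc (2^ℓ : ℝ) ≤ znorm (φ (Mnum d ℓ)) := key
  _ ≤ znorm (φ τ) := hm hτ

lemma stmt6_one_le_xval {d : ℕ} (j : ℕ) (m : Fin d → ℤ) : (1:ℝ) ≤ 1 + znorm m / 2^j := by
  have h2j : (0:ℝ) < 2^j := by positivity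
  nlinarith [div_nonneg (stmt6_znorm_nonneg m) h2j.le]

lemma stmt6_key_block {d : ℕ} (j : ℕ) (m : Fin d → ℤ) (e1 e2 : ℝ) (he : e1 ≤ -e2) :
    ((1 + znorm m / 2 ^ j) : ℝ) ^ e1 ≤ 1 * (1 + znorm m / 2 ^ j) ^ (-e2) := by
  rw [one_mul]; exact Real.rpow_le_rpow_of_exponent_le (stmt6_one_le_xval j m) he

lemma stmt6_key_ann {d : ℕ} (j ℓ : ℕ) (m : Fin d → ℤ) (e1 e2 E' : ℝ) (hjℓ : j ≤ ℓ)
    (he : e1 + e2 ≤ E') (hE' : E' ≤ 0) (hz : ((2:ℝ)^ℓ) ≤ znorm m) :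
    ((1 + znorm m / 2 ^ j) : ℝ) ^ e1 ≤
      (2:ℝ)^(((ℓ:ℝ)-(j:ℝ))*E') * (1 + znorm m / 2 ^ j) ^ (-e2) := by
  have hx1 := stmt6_one_le_xval j m
  set x : ℝ := 1 + znorm m / 2^j with hxdef
  have hx0 : (0:ℝ) < x := lt_of_lt_of_le one_pos hx1
  have hxe : x ^ e1 = x ^ (e1+e2) * x ^ (-e2) := by
    rw [← Real.rpow_add hx0]; ring_nf
  have hb : (2:ℝ)^(((ℓ:ℝ)-(j:ℝ))) ≤ x := by
    have heq : (2:ℝ)^(((ℓ:ℝ)-(j:ℝ))) = (2:ℝ)^(ℓ:ℝ) / (2:ℝ)^(j:ℝ) :=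
      Real.rpow_sub two_pos _ _
    rw [heq, Real.rpow_natCast, Real.rpow_natCast]
    have h2j : (0:ℝ) < (2:ℝ)^j := by positivity
    have hdd : (2:ℝ)^ℓ / 2^j ≤ znorm m / 2^j := by gcongr
    rw [hxdef]
    nlinarith [hdd]
  have hbpos : (0:ℝ) < (2:ℝ)^(((ℓ:ℝ)-(j:ℝ))) := Real.rpow_pos_of_pos two_pos _
  have h1 : x ^ (e1+e2) ≤ ((2:ℝ)^(((ℓ:ℝ)-(j:ℝ)))) ^ (e1+e2) :=
    Real.rpow_le_rpow_of_nonpos hbpos hb (le_trans he hE')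
  have h2 : ((2:ℝ)^(((ℓ:ℝ)-(j:ℝ)))) ^ (e1+e2) = (2:ℝ)^((((ℓ:ℝ)-(j:ℝ)))*(e1+e2)) :=
    (Real.rpow_mul (by norm_num) _ _).symm
  have h3 : (2:ℝ)^((((ℓ:ℝ)-(j:ℝ)))*(e1+e2)) ≤ (2:ℝ)^((((ℓ:ℝ)-(j:ℝ)))*E') := by
    apply Real.rpow_le_rpow_of_exponent_le one_le_two
    have : (0:ℝ) ≤ (ℓ:ℝ)-(j:ℝ) := by
      have h := (Nat.cast_le (α := ℝ)).2 hjℓ; linarith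
    exact mul_le_mul_of_nonneg_left he this
  calc x ^ e1 = x ^ (e1+e2) * x ^ (-e2) := hxe
  _ ≤ (2:ℝ)^((((ℓ:ℝ)-(j:ℝ)))*E') * x ^ (-e2) := by
      have := (h1.trans (le_of_eq h2)).trans h3
      exact mul_le_mul_of_nonneg_right this (Real.rpow_nonneg hx0.le _)

lemma stmt6_point_est {d : ℕ} (j : ℕ) (m : Fin d → ℤ) (P c α bj μ' ν lam ξ B : ℝ)
    (hP : 0 < P) (hlam : lam = 0 ∨ lam = 1) (hB : 0 ≤ B)
    (hkey : ((1 + znorm m / 2 ^ j) : ℝ) ^ (bj * P) ≤ B * (1 + znorm m / 2 ^ j) ^ (-(ν * c))) :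
    |(2:ℝ) ^ ((j:ℝ)*α) * (1 + znorm m / 2^j) ^ bj * lam * ξ| ^ P ≤
      (2:ℝ) ^ ((j:ℝ)*(α*P + μ'*c)) * B *
        (((2:ℝ) ^ ((j:ℝ)*μ') * (1 + znorm m / 2^j) ^ ν) ^ (-c) * lam * |ξ|^P) := by
  have h2 : (0:ℝ) < 2 := by norm_num
  have hx1 := stmt6_one_le_xval j m
  set x : ℝ := 1 + znorm m / 2^j with hxdef
  have hx0 : (0:ℝ) < x := lt_of_lt_of_le one_pos hx1
  have hlam0 : 0 ≤ lam := by rcases hlam with h|h <;> simp [h]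
  have hlamP : lam ^ P = lam := by
    rcases hlam with h|h <;> simp [h, Real.zero_rpow hP.ne', Real.one_rpow]
  have hLHS : |(2:ℝ) ^ ((j:ℝ)*α) * x ^ bj * lam * ξ| ^ P
      = (2:ℝ) ^ ((j:ℝ)*α*P) * x ^ (bj*P) * lam * |ξ| ^ P := by
    rw [abs_mul, abs_mul, abs_of_nonneg (by positivity : (0:ℝ) ≤ (2:ℝ) ^ ((j:ℝ)*α) * x ^ bj),
        abs_of_nonneg hlam0]
    rw [Real.mul_rpow (by positivity) (abs_nonneg ξ),
        Real.mul_rpow (by positivity) hlam0,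
        Real.mul_rpow (by positivity) (by positivity),
        ← Real.rpow_mul h2.le, ← Real.rpow_mul hx0.le, hlamP]
  have hrho : ((2:ℝ) ^ ((j:ℝ)*μ') * x ^ ν) ^ (-c)
      = (2:ℝ) ^ (-((j:ℝ)*μ'*c)) * x ^ (-(ν*c)) := by
    rw [Real.mul_rpow (by positivity) (by positivity),
        ← Real.rpow_mul h2.le, ← Real.rpow_mul hx0.le]
    ring_nf
  rw [hLHS, hrho]
  have h2pow : (2:ℝ) ^ ((j:ℝ)*(α*P + μ'*c)) * (2:ℝ) ^ (-((j:ℝ)*μ'*c)) = (2:ℝ) ^ ((j:ℝ)*α*P) := by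
    rw [← Real.rpow_add h2]
    ring_nf
  calc (2:ℝ) ^ ((j:ℝ)*α*P) * x ^ (bj*P) * lam * |ξ| ^ P
      ≤ (2:ℝ) ^ ((j:ℝ)*α*P) * (B * x ^ (-(ν*c))) * lam * |ξ| ^ P := by
        have hξP : (0:ℝ) ≤ |ξ| ^ P := by positivity
        have h2p : (0:ℝ) ≤ (2:ℝ) ^ ((j:ℝ)*α*P) := by positivity
        gcongr
    _ = (2:ℝ) ^ ((j:ℝ)*(α*P + μ'*c)) * B *
        ((2:ℝ) ^ (-((j:ℝ)*μ'*c)) * x ^ (-(ν*c)) * lam * |ξ|^P) := by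
        rw [← h2pow]; ring

lemma stmt6_sum_blocks (f : ℕ → ℝ≥0∞) (Mo : ℕ → ℕ) (hMo : Monotone Mo) {j L : ℕ} (hjL : j ≤ L) :
    ∑ τ ∈ Finset.range (Mo L), f τ
      = ∑ τ ∈ Finset.range (Mo j), f τ
        + ∑ ℓ ∈ Finset.Ico j L, ∑ τ ∈ Finset.Ico (Mo ℓ) (Mo (ℓ+1)), f τ := by
  induction L, hjL using Nat.le_induction with
  | base => simp
  | succ L hjL ih =>
      rw [Finset.range_eq_Ico,
        ← Finset.sum_Ico_consecutive f (Nat.zero_le (Mo L)) (hMo (Nat.le_succ L)),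
        ← Finset.range_eq_Ico, ih, Finset.sum_Ico_succ_top hjL]
      ring

lemma stmt6_geom_partial (x : ℝ) (h0 : 0 ≤ x) (h1 : x < 1) (n : ℕ) :
    ∑ k ∈ Finset.range n, x^k ≤ (1-x)⁻¹ := by
  rw [← tsum_geometric_of_lt_one h0 h1]
  exact Summable.sum_le_tsum _ (fun i _ => by positivity) (summable_geometric_of_lt_one h0 h1)

lemma stmt6_delta_choice (a1 a2 a3 c0 c3 : ℝ) (h1 : a1 < 0) (h2 : a2 < 0) (h3 : a3 < 0)
    (hc0 : 0 ≤ c0) (hc3 : 0 ≤ c3) :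
    ∃ δ : ℝ, 0 < δ ∧ δ < 1 ∧ a1 + δ*c0 < 0 ∧ a2 + δ*c0 < 0 ∧ a3 + δ*c3 < 0 := by
  set ε := min (min (-a1) (-a2)) (-a3) with hεdef
  have hεpos : 0 < ε := lt_min (lt_min (by linarith) (by linarith)) (by linarith)
  set S := c0 + c3 + 1 with hSdef
  have hSpos : 0 < S := by linarith
  have hδ0 : 0 < min (1/2 : ℝ) (ε/(2*S)) := lt_min (by norm_num) (by positivity)
  have hδ := min_le_right (1/2 : ℝ) (ε/(2*S))
  have he1 : ε ≤ -a1 := le_trans (min_le_left _ _) (min_le_left _ _)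
  have he2 : ε ≤ -a2 := le_trans (min_le_left _ _) (min_le_right _ _)
  have he3 : ε ≤ -a3 := min_le_right _ _
  have key0 : (ε/(2*S))*c0 ≤ ε/2 := by
    rw [div_mul_eq_mul_div, div_le_div_iff₀ (by linarith) (by norm_num)]
    nlinarith [mul_nonneg hεpos.le hc3]
  have key3 : (ε/(2*S))*c3 ≤ ε/2 := by
    rw [div_mul_eq_mul_div, div_le_div_iff₀ (by linarith) (by norm_num)]
    nlinarith [mul_nonneg hεpos.le hc0]
  have m0 : (min (1/2 : ℝ) (ε/(2*S)))*c0 ≤ ε/2 :=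
    le_trans (mul_le_mul_of_nonneg_right hδ hc0) key0
  have m3 : (min (1/2 : ℝ) (ε/(2*S)))*c3 ≤ ε/2 :=
    le_trans (mul_le_mul_of_nonneg_right hδ hc3) key3
  exact ⟨min (1/2) (ε/(2*S)), hδ0,
    lt_of_le_of_lt (min_le_left _ _) (by norm_num),
    by linarith, by linarith, by linarith⟩

lemma stmt6_geo_sum_bound (d : ℕ) (E' : ℝ) (hE'd : E' + d < 0) (j L : ℕ) :
    ∑ ℓ ∈ Finset.Ico j L, (2:ℝ) ^ (((ℓ:ℝ) - (j:ℝ)) * E') * (Nnum d ℓ : ℝ)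
      ≤ 5^d * (2:ℝ)^((j:ℝ)*(d:ℝ)) * (1 - (2:ℝ)^(E' + (d:ℝ)))⁻¹ := by
  have hg0pos : (0:ℝ) < (2:ℝ)^(E'+(d:ℝ)) := Real.rpow_pos_of_pos two_pos _
  have hg01 : (2:ℝ)^(E'+(d:ℝ)) < 1 := Real.rpow_lt_one_of_one_lt_of_neg one_lt_two hE'd
  rw [Finset.sum_Ico_eq_sum_range]
  have hstep : ∀ k : ℕ, (2:ℝ)^((((j+k:ℕ):ℝ) - (j:ℝ)) * E') * (Nnum d (j+k) : ℝ)
      ≤ 5^d * (2:ℝ)^((j:ℝ)*(d:ℝ)) * ((2:ℝ)^(E'+(d:ℝ)))^k := by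
    intro k
    have hN : (Nnum d (j+k) : ℝ) ≤ 5^d * (2:ℝ)^(((j:ℝ)+(k:ℝ))*(d:ℝ)) := by
      calc (Nnum d (j+k):ℝ) ≤ ((5^d * 2^((j+k)*d) : ℕ):ℝ) := Nat.cast_le.2 (stmt6_Nnum_le d (j+k))
      _ = 5^d * (2:ℝ)^(((j:ℝ)+(k:ℝ))*(d:ℝ)) := by
          push_cast
          rw [← Real.rpow_natCast (2:ℝ) ((j+k)*d)]
          push_cast
          ring_nf
    have hcast : (((j+k:ℕ)):ℝ) - (j:ℝ) = (k:ℝ) := by push_cast; ring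
    rw [hcast]
    calc (2:ℝ)^((k:ℝ)*E') * (Nnum d (j+k):ℝ)
        ≤ (2:ℝ)^((k:ℝ)*E') * (5^d * (2:ℝ)^(((j:ℝ)+(k:ℝ))*(d:ℝ))) :=
          mul_le_mul_of_nonneg_left hN (Real.rpow_nonneg two_pos.le _)
      _ = 5^d * (2:ℝ)^((j:ℝ)*(d:ℝ)) * ((2:ℝ)^(E'+(d:ℝ)))^k := by
          rw [show ((2:ℝ)^(E'+(d:ℝ)))^k = (2:ℝ)^((E'+(d:ℝ))*(k:ℝ)) from by
            rw [← Real.rpow_natCast ((2:ℝ)^(E'+(d:ℝ))) k, ← Real.rpow_mul two_pos.le],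
            show (2:ℝ)^((k:ℝ)*E') * (5^d * (2:ℝ)^(((j:ℝ)+(k:ℝ))*(d:ℝ)))
              = 5^d * ((2:ℝ)^((k:ℝ)*E') * (2:ℝ)^(((j:ℝ)+(k:ℝ))*(d:ℝ))) from by ring,
            ← Real.rpow_add two_pos,
            show 5^d * (2:ℝ)^((j:ℝ)*(d:ℝ)) * (2:ℝ)^((E'+(d:ℝ))*(k:ℝ))
              = 5^d * ((2:ℝ)^((j:ℝ)*(d:ℝ)) * (2:ℝ)^((E'+(d:ℝ))*(k:ℝ))) from by ring,
            ← Real.rpow_add two_pos,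
            show (k:ℝ)*E' + ((j:ℝ)+(k:ℝ))*(d:ℝ) = (j:ℝ)*(d:ℝ) + (E'+(d:ℝ))*(k:ℝ) from by ring]
  calc ∑ k ∈ Finset.range (L-j), (2:ℝ)^((((j+k:ℕ):ℝ) - (j:ℝ)) * E') * (Nnum d (j+k) : ℝ)
      ≤ ∑ k ∈ Finset.range (L-j), 5^d * (2:ℝ)^((j:ℝ)*(d:ℝ)) * ((2:ℝ)^(E'+(d:ℝ)))^k :=
        Finset.sum_le_sum fun k _ => hstep k
    _ = 5^d * (2:ℝ)^((j:ℝ)*(d:ℝ)) * ∑ k ∈ Finset.range (L-j), ((2:ℝ)^(E'+(d:ℝ)))^k := by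
        rw [Finset.mul_sum]
    _ ≤ 5^d * (2:ℝ)^((j:ℝ)*(d:ℝ)) * (1 - (2:ℝ)^(E' + (d:ℝ)))⁻¹ := by
        refine mul_le_mul_of_nonneg_left (stmt6_geom_partial _ hg0pos.le hg01 _) ?_
        positivity

lemma stmt6_lpNorm_top {ι : Type*} (x : ι → ℝ≥0∞) : lpNorm ∞ x = ⨆ i, x i := by
  simp [_root_.lpNorm]

lemma stmt6_lpNorm_ne_top {q : ℝ≥0∞} (hq : q ≠ ∞) {ι : Type*} (x : ι → ℝ≥0∞) :
    lpNorm q x = (∑' i, x i ^ q.toReal) ^ (1/q.toReal) := by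
  simp [_root_.lpNorm, hq]

lemma stmt6_cancel (A S : ℝ) (M : ℝ) (hM : M ≠ 0) : (A * M) * (M⁻¹ * S) = A * S := by
  field_simp


set_option maxHeartbeats 1000000 in
/-- Bernoulli norm lemma. Let `p, r ∈ (0,∞)`, `q ∈ (0,∞]`,
`μ, ν ∈ (-∞,0]` and assume Property A''. Then there are `δ ∈ (0,1)` with
`βp + d + (νp/max{r,p})(1-δ) < 0`, `γp + d + (νp/max{r,p})(1-δ) < 0` and
`s + d/2 + α + (μ/max{r,p})(1-δ) < 0`, and a constant `C > 0` (independent of the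
families below) such that for all families `(ξ_{j,t,m})` of reals and `(λ_{j,t,m})` of
numbers in `{0,1}`, the sequence
`a_{j,t,m} = 2^{jα}(1+‖m‖_∞/2^j)^{β+(γ-β)𝟙_{j=0}} λ_{j,t,m} ξ_{j,t,m}` satisfies
`‖a‖_{b^s_{p,q}} ≤ C · Ξ̃^{1/p}` with `Ξ̃` formed for this `δ`. -/
theorem stmt6 (d : ℕ) (hd : 0 < d) (s α β γ μ' ν r : ℝ) (p q : ℝ≥0∞)
    (hp0 : 0 < p) (hp : p ≠ ∞) (hq : 0 < q) (hr : 0 < r)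
    (hμ : μ' ≤ 0) (hν : ν ≤ 0)
    (hA : PropertyA'' d s α β γ μ' ν r p) :
    ∃ δ : ℝ, 0 < δ ∧ δ < 1 ∧
      β * p.toReal + d + ν * p.toReal / max r p.toReal * (1 - δ) < 0 ∧
      γ * p.toReal + d + ν * p.toReal / max r p.toReal * (1 - δ) < 0 ∧
      s + d / 2 + α + μ' / max r p.toReal * (1 - δ) < 0 ∧
      ∃ C : ℝ, 0 < C ∧
        ∀ φ : ℕ → Fin d → ℤ, Function.Bijective φ →
          Monotone (fun τ => znorm (φ τ)) →
          ∀ lam ξ : ℕ → (Fin d → Bool) → (Fin d → ℤ) → ℝ,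
            (∀ j t m, lam j t m = 0 ∨ lam j t m = 1) →
            besovNorm d s p q
                (fun j t m => priorCoefB d α β γ j m * lam j t m * ξ j t m)
              ≤ ENNReal.ofReal C *
                  XiB d p.toReal r μ' ν δ φ lam ξ ^ (1 / p.toReal) := by
  classical
  have hPpos : 0 < p.toReal := ENNReal.toReal_pos hp0.ne' hp
  have hMxpos : 0 < max r p.toReal := lt_of_lt_of_le hr (le_max_left _ _)
  rw [PropertyA'', if_neg hp] at hA
  obtain ⟨hA1, hA2, hA3⟩ := hA
  have ha1 : γ * p.toReal + d + ν * p.toReal / max r p.toReal < 0 := by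
    have h := mul_neg_of_pos_of_neg hPpos hA1
    have he : p.toReal * (γ + d / p.toReal + ν / max r p.toReal)
        = γ * p.toReal + d + ν * p.toReal / max r p.toReal := by
      field_simp
    linarith [he ▸ h]
  have ha2 : β * p.toReal + d + ν * p.toReal / max r p.toReal < 0 := by
    have h := mul_neg_of_pos_of_neg hPpos hA2
    have he : p.toReal * (β + d / p.toReal + ν / max r p.toReal)
        = β * p.toReal + d + ν * p.toReal / max r p.toReal := by
      field_simp
    linarith [he ▸ h]
  have hc0 : 0 ≤ -(ν * p.toReal / max r p.toReal) := by
    have h : ν * p.toReal / max r p.toReal ≤ 0 :=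
      div_nonpos_of_nonpos_of_nonneg (mul_nonpos_of_nonpos_of_nonneg hν hPpos.le) hMxpos.le
    linarith
  have hc3 : 0 ≤ -(μ' / max r p.toReal) := by
    have h : μ' / max r p.toReal ≤ 0 := div_nonpos_of_nonpos_of_nonneg hμ hMxpos.le
    linarith
  obtain ⟨δ, hδ0, hδ1, hgγ, hgβ, hgs⟩ :=
    stmt6_delta_choice _ _ _ _ _ ha1 ha2 hA3 hc0 hc3
  have hGβ : β * p.toReal + d + ν * p.toReal / max r p.toReal * (1 - δ) < 0 := by
    have hh : β * p.toReal + d + ν * p.toReal / max r p.toReal * (1 - δ)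
        = (β * p.toReal + d + ν * p.toReal / max r p.toReal)
          + δ * -(ν * p.toReal / max r p.toReal) := by ring
    rw [hh]; exact hgβ
  have hGγ : γ * p.toReal + d + ν * p.toReal / max r p.toReal * (1 - δ) < 0 := by
    have hh : γ * p.toReal + d + ν * p.toReal / max r p.toReal * (1 - δ)
        = (γ * p.toReal + d + ν * p.toReal / max r p.toReal)
          + δ * -(ν * p.toReal / max r p.toReal) := by ring
    rw [hh]; exact hgγ
  have hGs : s + d / 2 + α + μ' / max r p.toReal * (1 - δ) < 0 := by
    have hh : s + d / 2 + α + μ' / max r p.toReal * (1 - δ)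
        = (s + d / 2 + α + μ' / max r p.toReal) + δ * -(μ' / max r p.toReal) := by ring
    rw [hh]; exact hgs
  refine ⟨δ, hδ0, hδ1, hGβ, hGγ, hGs, ?_⟩
  -- constants
  set c : ℝ := p.toReal / max r p.toReal * (1 - δ) with hcdef
  have hcpos : 0 < c := mul_pos (div_pos hPpos hMxpos) (by linarith)
  have hνc : ν * c = ν * p.toReal / max r p.toReal * (1 - δ) := by rw [hcdef]; ring
  set E' : ℝ := max (β * p.toReal) (γ * p.toReal) + ν * c with hE'def
  have hE'd : E' + d < 0 := by
    rcases max_cases (β * p.toReal) (γ * p.toReal) with ⟨h, _⟩ | ⟨h, _⟩ <;>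
      rw [hE'def, h] <;> linarith
  have hE'0 : E' ≤ 0 := by
    have hdnn : (0:ℝ) ≤ d := Nat.cast_nonneg d
    linarith
  set E2 : ℝ := s + d / 2 + α + μ' * c / p.toReal with hE2def
  have hE2 : E2 < 0 := by
    have he : μ' * c / p.toReal = μ' / max r p.toReal * (1 - δ) := by
      rw [hcdef]; field_simp
    rw [hE2def, he]; exact hGs
  set g0 : ℝ := (2:ℝ) ^ (E' + (d:ℝ)) with hg0def
  have hg0pos : 0 < g0 := Real.rpow_pos_of_pos two_pos _
  have hg01 : g0 < 1 := Real.rpow_lt_one_of_one_lt_of_neg one_lt_two hE'd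
  have h1g0 : 0 < 1 - g0 := by linarith
  set K0 : ℝ := 5 ^ d * (1 + (1 - g0)⁻¹) with hK0def
  have hK0pos : 0 < K0 := by
    have h5 : (0:ℝ) < 5 ^ d := by positivity
    have hi : (0:ℝ) < (1 - g0)⁻¹ := inv_pos.2 h1g0
    nlinarith
  -- the main per-(j,t) estimate
  have main : ∀ φ : ℕ → Fin d → ℤ, Function.Bijective φ →
      Monotone (fun τ => znorm (φ τ)) →
      ∀ lam ξ : ℕ → (Fin d → Bool) → (Fin d → ℤ) → ℝ,
        (∀ j t m, lam j t m = 0 ∨ lam j t m = 1) →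
        ∀ (j : ℕ) (t : Fin d → Bool),
          ENNReal.ofReal ((2:ℝ) ^ ((j:ℝ) * (s + d / 2 - d * (p⁻¹).toReal))) *
            lpNorm p (fun m : Fin d → ℤ =>
              ENNReal.ofReal |priorCoefB d α β γ j m * lam j t m * ξ j t m|)
          ≤ ENNReal.ofReal (K0 ^ (1/p.toReal) * (2:ℝ) ^ ((j:ℝ) * E2)) *
              XiB d p.toReal r μ' ν δ φ lam ξ ^ (1/p.toReal) := by
    intro φ hφb hφm lam ξ hlam j t
    have hexp : p.toReal / max r p.toReal * (δ - 1) = -c := by rw [hcdef]; ring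
    have hbj : (if j = 0 then γ else β) * p.toReal + ν * c ≤ E' := by
      rw [hE'def]
      split_ifs
      · exact add_le_add_left (le_max_right _ _) _
      · exact add_le_add_left (le_max_left _ _) _
    -- pointwise bounds
    have hpt1 : ∀ m : Fin d → ℤ,
        |priorCoefB d α β γ j m * lam j t m * ξ j t m| ^ p.toReal
          ≤ (2:ℝ) ^ ((j:ℝ) * (α * p.toReal + μ' * c)) *
            (rhoB d μ' ν j m ^ (p.toReal / max r p.toReal * (δ - 1)) * lam j t m *
              |ξ j t m| ^ p.toReal) := by
      intro m
      rw [priorCoefB, rhoB, hexp]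
      have h := stmt6_point_est j m p.toReal c α (if j = 0 then γ else β) μ' ν
        (lam j t m) (ξ j t m) 1 hPpos (hlam j t m) one_pos.le
        (stmt6_key_block j m _ _ (by linarith))
      simpa [mul_one] using h
    have hpt2 : ∀ ℓ, j ≤ ℓ → ∀ τ, Mnum d ℓ ≤ τ →
        |priorCoefB d α β γ j (φ τ) * lam j t (φ τ) * ξ j t (φ τ)| ^ p.toReal
          ≤ (2:ℝ) ^ ((j:ℝ) * (α * p.toReal + μ' * c)) * (2:ℝ) ^ (((ℓ:ℝ) - (j:ℝ)) * E') *
            (rhoB d μ' ν j (φ τ) ^ (p.toReal / max r p.toReal * (δ - 1)) * lam j t (φ τ) *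
              |ξ j t (φ τ)| ^ p.toReal) := by
      intro ℓ hℓ τ hτ
      rw [priorCoefB, rhoB, hexp]
      exact stmt6_point_est j (φ τ) p.toReal c α (if j = 0 then γ else β) μ' ν
        (lam j t (φ τ)) (ξ j t (φ τ)) _ hPpos (hlam j t (φ τ))
        (Real.rpow_nonneg two_pos.le _)
        (stmt6_key_ann j ℓ (φ τ) _ _ E' hℓ hbj hE'0 (stmt6_phi_lb hd φ hφb hφm ℓ τ hτ))
    -- components of XiB
    have hXcomp1 : ENNReal.ofReal ((Mnum d j : ℝ)⁻¹ * ∑ τ ∈ Finset.range (Mnum d j),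
          rhoB d μ' ν j (φ τ) ^ (p.toReal / max r p.toReal * (δ - 1)) * lam j t (φ τ) *
            |ξ j t (φ τ)| ^ p.toReal)
        ≤ XiB d p.toReal r μ' ν δ φ lam ξ := by
      rw [XiB]
      exact le_iSup_of_le t (le_iSup_of_le j le_self_add)
    have hXcomp2 : ∀ ℓ, j ≤ ℓ →
        ENNReal.ofReal ((Nnum d ℓ : ℝ)⁻¹ *
            ∑ τ ∈ Finset.Ico (Mnum d ℓ) (Mnum d (ℓ+1)),
              rhoB d μ' ν j (φ τ) ^ (p.toReal / max r p.toReal * (δ - 1)) * lam j t (φ τ) *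
                |ξ j t (φ τ)| ^ p.toReal)
          ≤ XiB d p.toReal r μ' ν δ φ lam ξ := by
      intro ℓ hℓ
      rw [XiB]
      refine le_iSup_of_le t (le_iSup_of_le j (le_trans ?_ le_add_self))
      exact le_iSup_of_le ℓ (le_iSup_of_le hℓ le_rfl)
    have hGnn : ∀ τ : ℕ, 0 ≤ rhoB d μ' ν j (φ τ) ^ (p.toReal / max r p.toReal * (δ - 1)) *
        lam j t (φ τ) * |ξ j t (φ τ)| ^ p.toReal := by
      intro τ
      have h1 : (0:ℝ) ≤ rhoB d μ' ν j (φ τ) ^ (p.toReal / max r p.toReal * (δ - 1)) := by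
        apply Real.rpow_nonneg
        rw [rhoB]
        exact mul_nonneg (Real.rpow_nonneg two_pos.le _)
          (Real.rpow_nonneg (le_trans zero_le_one (stmt6_one_le_xval j _)) _)
      have h2 : (0:ℝ) ≤ lam j t (φ τ) := by rcases hlam j t (φ τ) with h|h <;> simp [h]
      exact mul_nonneg (mul_nonneg h1 h2) (Real.rpow_nonneg (abs_nonneg _) _)
    have hFnn : ∀ m : Fin d → ℤ,
        0 ≤ |priorCoefB d α β γ j m * lam j t m * ξ j t m| ^ p.toReal := fun m => by positivity
    have hArnn : (0:ℝ) ≤ (2:ℝ) ^ ((j:ℝ) * (α * p.toReal + μ' * c)) :=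
      Real.rpow_nonneg two_pos.le _
    -- block sum bound
    have hblock : ENNReal.ofReal (∑ τ ∈ Finset.range (Mnum d j),
          |priorCoefB d α β γ j (φ τ) * lam j t (φ τ) * ξ j t (φ τ)| ^ p.toReal)
        ≤ ENNReal.ofReal ((2:ℝ) ^ ((j:ℝ) * (α * p.toReal + μ' * c)) * (Mnum d j : ℝ)) *
            XiB d p.toReal r μ' ν δ φ lam ξ := by
      have hMjpos : (0:ℝ) < (Mnum d j : ℝ) := by exact_mod_cast stmt6_Mnum_pos d j
      have hsum : ∑ τ ∈ Finset.range (Mnum d j),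
            |priorCoefB d α β γ j (φ τ) * lam j t (φ τ) * ξ j t (φ τ)| ^ p.toReal
          ≤ ((2:ℝ) ^ ((j:ℝ) * (α * p.toReal + μ' * c)) * (Mnum d j : ℝ)) *
            ((Mnum d j : ℝ)⁻¹ * ∑ τ ∈ Finset.range (Mnum d j),
              rhoB d μ' ν j (φ τ) ^ (p.toReal / max r p.toReal * (δ - 1)) * lam j t (φ τ) *
                |ξ j t (φ τ)| ^ p.toReal) := by
        have h1 : ∑ τ ∈ Finset.range (Mnum d j),
              |priorCoefB d α β γ j (φ τ) * lam j t (φ τ) * ξ j t (φ τ)| ^ p.toReal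
            ≤ (2:ℝ) ^ ((j:ℝ) * (α * p.toReal + μ' * c)) *
              ∑ τ ∈ Finset.range (Mnum d j),
                rhoB d μ' ν j (φ τ) ^ (p.toReal / max r p.toReal * (δ - 1)) * lam j t (φ τ) *
                  |ξ j t (φ τ)| ^ p.toReal := by
          rw [Finset.mul_sum]
          exact Finset.sum_le_sum fun τ _ => hpt1 (φ τ)
        have h2 : ((2:ℝ) ^ ((j:ℝ) * (α * p.toReal + μ' * c)) * (Mnum d j : ℝ)) *
            ((Mnum d j : ℝ)⁻¹ * ∑ τ ∈ Finset.range (Mnum d j),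
              rhoB d μ' ν j (φ τ) ^ (p.toReal / max r p.toReal * (δ - 1)) * lam j t (φ τ) *
                |ξ j t (φ τ)| ^ p.toReal)
            = (2:ℝ) ^ ((j:ℝ) * (α * p.toReal + μ' * c)) *
              ∑ τ ∈ Finset.range (Mnum d j),
                rhoB d μ' ν j (φ τ) ^ (p.toReal / max r p.toReal * (δ - 1)) * lam j t (φ τ) *
                  |ξ j t (φ τ)| ^ p.toReal := stmt6_cancel _ _ _ hMjpos.ne'
        rw [h2]; exact h1
      refine le_trans (ENNReal.ofReal_le_ofReal hsum) ?_
      rw [ENNReal.ofReal_mul (by positivity)]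
      exact mul_le_mul_right hXcomp1 _
    -- annulus sum bound
    have hann : ∀ ℓ, j ≤ ℓ →
        ENNReal.ofReal (∑ τ ∈ Finset.Ico (Mnum d ℓ) (Mnum d (ℓ+1)),
            |priorCoefB d α β γ j (φ τ) * lam j t (φ τ) * ξ j t (φ τ)| ^ p.toReal)
          ≤ ENNReal.ofReal ((2:ℝ) ^ ((j:ℝ) * (α * p.toReal + μ' * c)) *
              (2:ℝ) ^ (((ℓ:ℝ) - (j:ℝ)) * E') * (Nnum d ℓ : ℝ)) *
              XiB d p.toReal r μ' ν δ φ lam ξ := by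
      intro ℓ hℓ
      have hNpos : (0:ℝ) < (Nnum d ℓ : ℝ) := by exact_mod_cast stmt6_Nnum_pos d hd ℓ
      have hsum : ∑ τ ∈ Finset.Ico (Mnum d ℓ) (Mnum d (ℓ+1)),
            |priorCoefB d α β γ j (φ τ) * lam j t (φ τ) * ξ j t (φ τ)| ^ p.toReal
          ≤ ((2:ℝ) ^ ((j:ℝ) * (α * p.toReal + μ' * c)) *
              (2:ℝ) ^ (((ℓ:ℝ) - (j:ℝ)) * E') * (Nnum d ℓ : ℝ)) *
            ((Nnum d ℓ : ℝ)⁻¹ * ∑ τ ∈ Finset.Ico (Mnum d ℓ) (Mnum d (ℓ+1)),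
              rhoB d μ' ν j (φ τ) ^ (p.toReal / max r p.toReal * (δ - 1)) * lam j t (φ τ) *
                |ξ j t (φ τ)| ^ p.toReal) := by
        have h1 : ∑ τ ∈ Finset.Ico (Mnum d ℓ) (Mnum d (ℓ+1)),
              |priorCoefB d α β γ j (φ τ) * lam j t (φ τ) * ξ j t (φ τ)| ^ p.toReal
            ≤ ((2:ℝ) ^ ((j:ℝ) * (α * p.toReal + μ' * c)) *
                (2:ℝ) ^ (((ℓ:ℝ) - (j:ℝ)) * E')) *
              ∑ τ ∈ Finset.Ico (Mnum d ℓ) (Mnum d (ℓ+1)),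
                rhoB d μ' ν j (φ τ) ^ (p.toReal / max r p.toReal * (δ - 1)) * lam j t (φ τ) *
                  |ξ j t (φ τ)| ^ p.toReal := by
          rw [Finset.mul_sum]
          exact Finset.sum_le_sum fun τ hτ => hpt2 ℓ hℓ τ (Finset.mem_Ico.1 hτ).1
        have h2 : ((2:ℝ) ^ ((j:ℝ) * (α * p.toReal + μ' * c)) *
              (2:ℝ) ^ (((ℓ:ℝ) - (j:ℝ)) * E') * (Nnum d ℓ : ℝ)) *
            ((Nnum d ℓ : ℝ)⁻¹ * ∑ τ ∈ Finset.Ico (Mnum d ℓ) (Mnum d (ℓ+1)),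
              rhoB d μ' ν j (φ τ) ^ (p.toReal / max r p.toReal * (δ - 1)) * lam j t (φ τ) *
                |ξ j t (φ τ)| ^ p.toReal)
            = ((2:ℝ) ^ ((j:ℝ) * (α * p.toReal + μ' * c)) *
                (2:ℝ) ^ (((ℓ:ℝ) - (j:ℝ)) * E')) *
              ∑ τ ∈ Finset.Ico (Mnum d ℓ) (Mnum d (ℓ+1)),
                rhoB d μ' ν j (φ τ) ^ (p.toReal / max r p.toReal * (δ - 1)) * lam j t (φ τ) *
                  |ξ j t (φ τ)| ^ p.toReal := stmt6_cancel _ _ _ hNpos.ne'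
        rw [h2]; exact h1
      refine le_trans (ENNReal.ofReal_le_ofReal hsum) ?_
      rw [ENNReal.ofReal_mul (by positivity)]
      exact mul_le_mul_right (hXcomp2 ℓ hℓ) _
    -- tsum bound
    have hT : ∑' m : Fin d → ℤ,
          ENNReal.ofReal (|priorCoefB d α β γ j m * lam j t m * ξ j t m| ^ p.toReal)
        ≤ ENNReal.ofReal (K0 * (2:ℝ) ^ ((j:ℝ) * (α * p.toReal + μ' * c + d))) *
            XiB d p.toReal r μ' ν δ φ lam ξ := by
      rw [← (Equiv.ofBijective φ hφb).tsum_eq (fun m : Fin d → ℤ =>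
        ENNReal.ofReal (|priorCoefB d α β γ j m * lam j t m * ξ j t m| ^ p.toReal))]
      simp only [Equiv.ofBijective_apply]
      rw [ENNReal.tsum_eq_iSup_nat]
      refine iSup_le fun n => ?_
      have hjL : j ≤ max j n := le_max_left _ _
      have hnL : n ≤ Mnum d (max j n) := by
        have h1 : max j n < 2 ^ (max j n + 1) := by
          have := Nat.lt_two_pow_self (n := max j n)
          have h2 : (2:ℕ) ^ (max j n) ≤ 2 ^ (max j n + 1) :=
            Nat.pow_le_pow_right (by norm_num) (by omega)
          omega
        have h2 : 2 ^ (max j n + 1) + 1 ≤ Mnum d (max j n) :=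
          Nat.le_self_pow hd.ne' _
        have h3 : n ≤ max j n := le_max_right _ _
        omega
      calc ∑ τ ∈ Finset.range n,
            ENNReal.ofReal (|priorCoefB d α β γ j (φ τ) * lam j t (φ τ) * ξ j t (φ τ)| ^ p.toReal)
          ≤ ∑ τ ∈ Finset.range (Mnum d (max j n)),
            ENNReal.ofReal (|priorCoefB d α β γ j (φ τ) * lam j t (φ τ) * ξ j t (φ τ)| ^ p.toReal) :=
            Finset.sum_le_sum_of_subset (Finset.range_subset_range.2 hnL)
        _ = ∑ τ ∈ Finset.range (Mnum d j),
              ENNReal.ofReal (|priorCoefB d α β γ j (φ τ) * lam j t (φ τ) * ξ j t (φ τ)| ^ p.toReal)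
            + ∑ ℓ ∈ Finset.Ico j (max j n), ∑ τ ∈ Finset.Ico (Mnum d ℓ) (Mnum d (ℓ+1)),
              ENNReal.ofReal (|priorCoefB d α β γ j (φ τ) * lam j t (φ τ) * ξ j t (φ τ)| ^ p.toReal) :=
            stmt6_sum_blocks _ (Mnum d) (stmt6_Mnum_mono d) hjL
        _ ≤ ENNReal.ofReal ((2:ℝ) ^ ((j:ℝ) * (α * p.toReal + μ' * c)) * (Mnum d j : ℝ)) *
              XiB d p.toReal r μ' ν δ φ lam ξ
            + ∑ ℓ ∈ Finset.Ico j (max j n),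
              ENNReal.ofReal ((2:ℝ) ^ ((j:ℝ) * (α * p.toReal + μ' * c)) *
                (2:ℝ) ^ (((ℓ:ℝ) - (j:ℝ)) * E') * (Nnum d ℓ : ℝ)) *
                XiB d p.toReal r μ' ν δ φ lam ξ := by
            refine add_le_add ?_ (Finset.sum_le_sum fun ℓ hℓ => ?_)
            · rw [← ENNReal.ofReal_sum_of_nonneg (fun τ _ => hFnn (φ τ))]
              exact hblock
            · rw [← ENNReal.ofReal_sum_of_nonneg (fun τ _ => hFnn (φ τ))]
              exact hann ℓ (Finset.mem_Ico.1 hℓ).1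
        _ = ENNReal.ofReal ((2:ℝ) ^ ((j:ℝ) * (α * p.toReal + μ' * c)) * (Mnum d j : ℝ)
              + ∑ ℓ ∈ Finset.Ico j (max j n),
                (2:ℝ) ^ ((j:ℝ) * (α * p.toReal + μ' * c)) *
                  (2:ℝ) ^ (((ℓ:ℝ) - (j:ℝ)) * E') * (Nnum d ℓ : ℝ)) *
              XiB d p.toReal r μ' ν δ φ lam ξ := by
            rw [← Finset.sum_mul, ← add_mul, ENNReal.ofReal_add (by positivity)
              (Finset.sum_nonneg fun ℓ _ => by positivity),
              ENNReal.ofReal_sum_of_nonneg (fun ℓ _ => by positivity)]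
        _ ≤ ENNReal.ofReal (K0 * (2:ℝ) ^ ((j:ℝ) * (α * p.toReal + μ' * c + d))) *
              XiB d p.toReal r μ' ν δ φ lam ξ := by
            refine mul_le_mul_left (ENNReal.ofReal_le_ofReal ?_) _
            -- real arithmetic
            have hMle : (Mnum d j : ℝ) ≤ 5^d * (2:ℝ)^((j:ℝ)*(d:ℝ)) := by
              calc (Mnum d j : ℝ) ≤ ((5^d * 2^(j*d) : ℕ) : ℝ) := Nat.cast_le.2 (stmt6_Mnum_le d j)
              _ = 5^d * (2:ℝ)^((j:ℝ)*(d:ℝ)) := by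
                  push_cast
                  rw [← Real.rpow_natCast (2:ℝ) (j*d)]
                  push_cast
                  ring_nf
            have hgeo := stmt6_geo_sum_bound d E' hE'd j (max j n)
            have hsplit : ∑ ℓ ∈ Finset.Ico j (max j n),
                (2:ℝ) ^ ((j:ℝ) * (α * p.toReal + μ' * c)) *
                  (2:ℝ) ^ (((ℓ:ℝ) - (j:ℝ)) * E') * (Nnum d ℓ : ℝ)
                = (2:ℝ) ^ ((j:ℝ) * (α * p.toReal + μ' * c)) *
                  ∑ ℓ ∈ Finset.Ico j (max j n),
                    (2:ℝ) ^ (((ℓ:ℝ) - (j:ℝ)) * E') * (Nnum d ℓ : ℝ) := by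
              rw [Finset.mul_sum]
              exact Finset.sum_congr rfl fun ℓ _ => by ring
            rw [hsplit]
            have hAR : (2:ℝ) ^ ((j:ℝ) * (α * p.toReal + μ' * c)) * (2:ℝ)^((j:ℝ)*(d:ℝ))
                = (2:ℝ) ^ ((j:ℝ) * (α * p.toReal + μ' * c + d)) := by
              rw [← Real.rpow_add two_pos]
              ring_nf
            calc (2:ℝ) ^ ((j:ℝ) * (α * p.toReal + μ' * c)) * (Mnum d j : ℝ)
                  + (2:ℝ) ^ ((j:ℝ) * (α * p.toReal + μ' * c)) *
                    ∑ ℓ ∈ Finset.Ico j (max j n),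
                      (2:ℝ) ^ (((ℓ:ℝ) - (j:ℝ)) * E') * (Nnum d ℓ : ℝ)
                ≤ (2:ℝ) ^ ((j:ℝ) * (α * p.toReal + μ' * c)) * (5^d * (2:ℝ)^((j:ℝ)*(d:ℝ)))
                  + (2:ℝ) ^ ((j:ℝ) * (α * p.toReal + μ' * c)) *
                    (5^d * (2:ℝ)^((j:ℝ)*(d:ℝ)) * (1 - g0)⁻¹) := by
                  refine add_le_add (mul_le_mul_of_nonneg_left hMle hArnn)
                    (mul_le_mul_of_nonneg_left ?_ hArnn)
                  rw [hg0def]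
                  exact hgeo
              _ = K0 * ((2:ℝ) ^ ((j:ℝ) * (α * p.toReal + μ' * c)) * (2:ℝ)^((j:ℝ)*(d:ℝ))) := by
                  rw [hK0def]; ring
              _ = K0 * (2:ℝ) ^ ((j:ℝ) * (α * p.toReal + μ' * c + d)) := by rw [hAR]
    -- from tsum to lpNorm and the Besov weight
    have hlp : lpNorm p (fun m : Fin d → ℤ =>
          ENNReal.ofReal |priorCoefB d α β γ j m * lam j t m * ξ j t m|)
        ≤ ENNReal.ofReal ((K0 * (2:ℝ) ^ ((j:ℝ) * (α * p.toReal + μ' * c + d))) ^ (1/p.toReal)) *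
            XiB d p.toReal r μ' ν δ φ lam ξ ^ (1/p.toReal) := by
      rw [_root_.lpNorm, if_neg hp]
      have heq : ∀ m : Fin d → ℤ,
          (ENNReal.ofReal |priorCoefB d α β γ j m * lam j t m * ξ j t m|) ^ p.toReal
            = ENNReal.ofReal (|priorCoefB d α β γ j m * lam j t m * ξ j t m| ^ p.toReal) :=
        fun m => ENNReal.ofReal_rpow_of_nonneg (abs_nonneg _) hPpos.le
      calc (∑' m : Fin d → ℤ,
            (ENNReal.ofReal |priorCoefB d α β γ j m * lam j t m * ξ j t m|) ^ p.toReal) ^ (1/p.toReal)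
          = (∑' m : Fin d → ℤ,
            ENNReal.ofReal (|priorCoefB d α β γ j m * lam j t m * ξ j t m| ^ p.toReal)) ^ (1/p.toReal) := by
            rw [tsum_congr heq]
        _ ≤ (ENNReal.ofReal (K0 * (2:ℝ) ^ ((j:ℝ) * (α * p.toReal + μ' * c + d))) *
              XiB d p.toReal r μ' ν δ φ lam ξ) ^ (1/p.toReal) :=
            ENNReal.rpow_le_rpow hT (by positivity)
        _ = (ENNReal.ofReal (K0 * (2:ℝ) ^ ((j:ℝ) * (α * p.toReal + μ' * c + d)))) ^ (1/p.toReal) *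
              XiB d p.toReal r μ' ν δ φ lam ξ ^ (1/p.toReal) :=
            ENNReal.mul_rpow_of_nonneg _ _ (by positivity)
        _ = ENNReal.ofReal ((K0 * (2:ℝ) ^ ((j:ℝ) * (α * p.toReal + μ' * c + d))) ^ (1/p.toReal)) *
              XiB d p.toReal r μ' ν δ φ lam ξ ^ (1/p.toReal) := by
            rw [ENNReal.ofReal_rpow_of_nonneg (by positivity) (by positivity)]
    have hRR : (2:ℝ) ^ ((j:ℝ) * (s + d / 2 - d * (p⁻¹).toReal)) *
        (K0 * (2:ℝ) ^ ((j:ℝ) * (α * p.toReal + μ' * c + d))) ^ (1/p.toReal)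
        = K0 ^ (1/p.toReal) * (2:ℝ) ^ ((j:ℝ) * E2) := by
      rw [ENNReal.toReal_inv, hE2def]
      rw [Real.mul_rpow hK0pos.le (Real.rpow_nonneg two_pos.le _),
        ← Real.rpow_mul two_pos.le]
      rw [show (2:ℝ) ^ ((j:ℝ) * (s + d / 2 - d * p.toReal⁻¹)) *
          (K0 ^ (1/p.toReal) * (2:ℝ) ^ ((j:ℝ) * (α * p.toReal + μ' * c + d) * (1/p.toReal)))
          = K0 ^ (1/p.toReal) * ((2:ℝ) ^ ((j:ℝ) * (s + d / 2 - d * p.toReal⁻¹)) *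
            (2:ℝ) ^ ((j:ℝ) * (α * p.toReal + μ' * c + d) * (1/p.toReal))) from by ring,
        ← Real.rpow_add two_pos]
      have hexp2 : (j:ℝ) * (s + d / 2 - d * p.toReal⁻¹)
          + (j:ℝ) * (α * p.toReal + μ' * c + d) * (1/p.toReal)
          = (j:ℝ) * (s + d / 2 + α + μ' * c / p.toReal) := by
        field_simp
        ring
      rw [hexp2]
    calc ENNReal.ofReal ((2:ℝ) ^ ((j:ℝ) * (s + d / 2 - d * (p⁻¹).toReal))) *
          lpNorm p (fun m : Fin d → ℤ =>
            ENNReal.ofReal |priorCoefB d α β γ j m * lam j t m * ξ j t m|)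
        ≤ ENNReal.ofReal ((2:ℝ) ^ ((j:ℝ) * (s + d / 2 - d * (p⁻¹).toReal))) *
            (ENNReal.ofReal ((K0 * (2:ℝ) ^ ((j:ℝ) * (α * p.toReal + μ' * c + d))) ^ (1/p.toReal)) *
              XiB d p.toReal r μ' ν δ φ lam ξ ^ (1/p.toReal)) := mul_le_mul_right hlp _
      _ = ENNReal.ofReal ((2:ℝ) ^ ((j:ℝ) * (s + d / 2 - d * (p⁻¹).toReal)) *
            (K0 * (2:ℝ) ^ ((j:ℝ) * (α * p.toReal + μ' * c + d))) ^ (1/p.toReal)) *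
            XiB d p.toReal r μ' ν δ φ lam ξ ^ (1/p.toReal) := by
          rw [← mul_assoc, ← ENNReal.ofReal_mul (by positivity)]
      _ = ENNReal.ofReal (K0 ^ (1/p.toReal) * (2:ℝ) ^ ((j:ℝ) * E2)) *
            XiB d p.toReal r μ' ν δ φ lam ξ ^ (1/p.toReal) := by rw [hRR]
  -- now produce the constant, splitting on q
  by_cases hqtop : q = ∞
  · subst hqtop
    refine ⟨K0 ^ (1/p.toReal), Real.rpow_pos_of_pos hK0pos _, ?_⟩
    intro φ hφb hφm lam ξ hlam
    simp only [besovNorm]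
    rw [stmt6_lpNorm_top]
    refine iSup_le fun jt => ?_
    refine le_trans (main φ hφb hφm lam ξ hlam jt.1.1 jt.1.2) ?_
    refine mul_le_mul_left (ENNReal.ofReal_le_ofReal ?_) _
    calc K0 ^ (1/p.toReal) * (2:ℝ) ^ ((jt.1.1:ℝ) * E2)
        ≤ K0 ^ (1/p.toReal) * 1 := by
          refine mul_le_mul_of_nonneg_left ?_ (Real.rpow_nonneg hK0pos.le _)
          exact Real.rpow_le_one_of_one_le_of_nonpos one_le_two
            (mul_nonpos_of_nonneg_of_nonpos (Nat.cast_nonneg _) hE2.le)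
      _ = K0 ^ (1/p.toReal) := mul_one _
  · have hQ : 0 < q.toReal := ENNReal.toReal_pos hq.ne' hqtop
    set y : ℝ := (2:ℝ) ^ (E2 * q.toReal) with hydef
    have hy0 : (0:ℝ) ≤ y := (Real.rpow_pos_of_pos two_pos _).le
    have hy1 : y < 1 :=
      Real.rpow_lt_one_of_one_lt_of_neg one_lt_two (mul_neg_of_neg_of_pos hE2 hQ)
    have h1y : (0:ℝ) < 1 - y := by linarith
    set K1 : ℝ := (K0 ^ (1/p.toReal)) ^ q.toReal with hK1def
    have hK1pos : 0 < K1 := Real.rpow_pos_of_pos (Real.rpow_pos_of_pos hK0pos _) _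
    set CQ : ℝ := (2:ℝ)^d * (K1 * (1-y)⁻¹) with hCQdef
    have hCQpos : 0 < CQ := by
      have h2d : (0:ℝ) < (2:ℝ)^d := by positivity
      have hiy : (0:ℝ) < (1-y)⁻¹ := inv_pos.2 h1y
      positivity
    refine ⟨CQ ^ (1/q.toReal), Real.rpow_pos_of_pos hCQpos _, ?_⟩
    intro φ hφb hφm lam ξ hlam
    simp only [besovNorm]
    rw [stmt6_lpNorm_ne_top hqtop]
    have hgeoENN : ∑' j : ℕ,
          (ENNReal.ofReal (K0 ^ (1/p.toReal) * (2:ℝ) ^ ((j:ℝ) * E2))) ^ q.toReal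
        ≤ ENNReal.ofReal (K1 * (1-y)⁻¹) := by
      have h1 : ∀ j : ℕ,
          (ENNReal.ofReal (K0 ^ (1/p.toReal) * (2:ℝ) ^ ((j:ℝ) * E2))) ^ q.toReal
            = ENNReal.ofReal (K1 * y^j) := by
        intro j
        rw [ENNReal.ofReal_rpow_of_nonneg (by positivity) hQ.le]
        congr 1
        rw [Real.mul_rpow (Real.rpow_nonneg hK0pos.le _) (Real.rpow_nonneg two_pos.le _),
          hK1def, hydef]
        congr 1
        rw [← Real.rpow_natCast ((2:ℝ)^(E2 * q.toReal)) j, ← Real.rpow_mul two_pos.le,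
          ← Real.rpow_mul two_pos.le]
        ring_nf
      rw [tsum_congr h1,
        ← ENNReal.ofReal_tsum_of_nonneg (fun j => by positivity)
          ((summable_geometric_of_lt_one hy0 hy1).mul_left K1)]
      apply ENNReal.ofReal_le_ofReal
      rw [tsum_mul_left, tsum_geometric_of_lt_one hy0 hy1]
    have hcount : ∑' jt : JIdx d,
          (ENNReal.ofReal (K0 ^ (1/p.toReal) * (2:ℝ) ^ ((jt.1.1:ℝ) * E2))) ^ q.toReal
        ≤ (2:ℝ≥0∞)^d * ENNReal.ofReal (K1 * (1-y)⁻¹) := by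
      have hinj : Function.Injective (fun jt : JIdx d => jt.1) := fun a b h => Subtype.ext h
      calc ∑' jt : JIdx d,
            (ENNReal.ofReal (K0 ^ (1/p.toReal) * (2:ℝ) ^ ((jt.1.1:ℝ) * E2))) ^ q.toReal
          ≤ ∑' x : ℕ × (Fin d → Bool),
            (ENNReal.ofReal (K0 ^ (1/p.toReal) * (2:ℝ) ^ ((x.1:ℝ) * E2))) ^ q.toReal :=
            ENNReal.tsum_comp_le_tsum_of_injective hinj
              (fun x => (ENNReal.ofReal (K0 ^ (1/p.toReal) * (2:ℝ) ^ ((x.1:ℝ) * E2))) ^ q.toReal)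
        _ = ∑' i : ℕ, ∑' _t : Fin d → Bool,
            (ENNReal.ofReal (K0 ^ (1/p.toReal) * (2:ℝ) ^ ((i:ℝ) * E2))) ^ q.toReal :=
            ENNReal.tsum_prod
              (f := fun (i : ℕ) (_ : Fin d → Bool) =>
                (ENNReal.ofReal (K0 ^ (1/p.toReal) * (2:ℝ) ^ ((i:ℝ) * E2))) ^ q.toReal)
        _ = ∑' i : ℕ, ((2:ℝ≥0∞)^d *
            (ENNReal.ofReal (K0 ^ (1/p.toReal) * (2:ℝ) ^ ((i:ℝ) * E2))) ^ q.toReal) := by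
            refine tsum_congr fun i => ?_
            rw [tsum_fintype, Finset.sum_const, nsmul_eq_mul, Finset.card_univ]
            congr 1
            rw [show Fintype.card (Fin d → Bool) = 2^d by simp [Fintype.card_fun]]
            push_cast
            rfl
        _ = (2:ℝ≥0∞)^d * ∑' i : ℕ,
            (ENNReal.ofReal (K0 ^ (1/p.toReal) * (2:ℝ) ^ ((i:ℝ) * E2))) ^ q.toReal :=
            ENNReal.tsum_mul_left
        _ ≤ (2:ℝ≥0∞)^d * ENNReal.ofReal (K1 * (1-y)⁻¹) := mul_le_mul_right hgeoENN _
    have hsum : ∑' jt : JIdx d,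
          (ENNReal.ofReal ((2:ℝ) ^ ((jt.1.1:ℝ) * (s + d / 2 - d * (p⁻¹).toReal))) *
            lpNorm p fun m : Fin d → ℤ =>
              ENNReal.ofReal |priorCoefB d α β γ jt.1.1 m * lam jt.1.1 jt.1.2 m *
                ξ jt.1.1 jt.1.2 m|) ^ q.toReal
        ≤ ENNReal.ofReal CQ *
            (XiB d p.toReal r μ' ν δ φ lam ξ ^ (1/p.toReal)) ^ q.toReal := by
      calc ∑' jt : JIdx d,
            (ENNReal.ofReal ((2:ℝ) ^ ((jt.1.1:ℝ) * (s + d / 2 - d * (p⁻¹).toReal))) *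
              lpNorm p fun m : Fin d → ℤ =>
                ENNReal.ofReal |priorCoefB d α β γ jt.1.1 m * lam jt.1.1 jt.1.2 m *
                  ξ jt.1.1 jt.1.2 m|) ^ q.toReal
          ≤ ∑' jt : JIdx d,
            (ENNReal.ofReal (K0 ^ (1/p.toReal) * (2:ℝ) ^ ((jt.1.1:ℝ) * E2)) *
              XiB d p.toReal r μ' ν δ φ lam ξ ^ (1/p.toReal)) ^ q.toReal :=
            ENNReal.tsum_le_tsum fun jt =>
              ENNReal.rpow_le_rpow (main φ hφb hφm lam ξ hlam jt.1.1 jt.1.2) hQ.le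
        _ = ∑' jt : JIdx d,
            ((ENNReal.ofReal (K0 ^ (1/p.toReal) * (2:ℝ) ^ ((jt.1.1:ℝ) * E2))) ^ q.toReal *
              (XiB d p.toReal r μ' ν δ φ lam ξ ^ (1/p.toReal)) ^ q.toReal) :=
            tsum_congr fun jt => ENNReal.mul_rpow_of_nonneg _ _ hQ.le
        _ = (∑' jt : JIdx d,
            (ENNReal.ofReal (K0 ^ (1/p.toReal) * (2:ℝ) ^ ((jt.1.1:ℝ) * E2))) ^ q.toReal) *
              (XiB d p.toReal r μ' ν δ φ lam ξ ^ (1/p.toReal)) ^ q.toReal :=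
            ENNReal.tsum_mul_right
        _ ≤ ((2:ℝ≥0∞)^d * ENNReal.ofReal (K1 * (1-y)⁻¹)) *
              (XiB d p.toReal r μ' ν δ φ lam ξ ^ (1/p.toReal)) ^ q.toReal :=
            mul_le_mul_left hcount _
        _ = ENNReal.ofReal CQ *
              (XiB d p.toReal r μ' ν δ φ lam ξ ^ (1/p.toReal)) ^ q.toReal := by
            have hofCQ : ENNReal.ofReal CQ
                = (2:ℝ≥0∞)^d * ENNReal.ofReal (K1 * (1-y)⁻¹) := by
              rw [hCQdef, ENNReal.ofReal_mul (by positivity),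
                ENNReal.ofReal_pow (by norm_num : (0:ℝ) ≤ 2)]
              norm_num
            rw [hofCQ]
    calc (∑' jt : JIdx d,
          (ENNReal.ofReal ((2:ℝ) ^ ((jt.1.1:ℝ) * (s + d / 2 - d * (p⁻¹).toReal))) *
            lpNorm p fun m : Fin d → ℤ =>
              ENNReal.ofReal |priorCoefB d α β γ jt.1.1 m * lam jt.1.1 jt.1.2 m *
                ξ jt.1.1 jt.1.2 m|) ^ q.toReal) ^ (1/q.toReal)
        ≤ (ENNReal.ofReal CQ *
            (XiB d p.toReal r μ' ν δ φ lam ξ ^ (1/p.toReal)) ^ q.toReal) ^ (1/q.toReal) :=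
          ENNReal.rpow_le_rpow hsum (by positivity)
      _ = (ENNReal.ofReal CQ) ^ (1/q.toReal) *
            ((XiB d p.toReal r μ' ν δ φ lam ξ ^ (1/p.toReal)) ^ q.toReal) ^ (1/q.toReal) :=
          ENNReal.mul_rpow_of_nonneg _ _ (by positivity)
      _ = ENNReal.ofReal (CQ ^ (1/q.toReal)) *
            XiB d p.toReal r μ' ν δ φ lam ξ ^ (1/p.toReal) := by
          rw [ENNReal.ofReal_rpow_of_nonneg hCQpos.le (by positivity),
            ← ENNReal.rpow_mul, mul_one_div_cancel hQ.ne', ENNReal.rpow_one]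


end
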